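/- Tightness of the dual upper bound in expectation: for every 0 ≤ n ≤ N, the infimum of the set { 𝔼[Ũ_n(M)] : M an 𝓕-martingale } equals 𝔼[Y*_n], and the infimum is attained by the Doob martingale M* of the Snell envelope. -/

import Mathlib

/-!
For any martingale `M`, backward induction along the Snell recursion, using the martingale
property of `M` and the tower property, gives
`Y p - M p ≤ 𝔼[max_{p ≤ m ≤ N} (G m - M m) | ℱ p]`; taking expectations, `𝔼[Y n] ≤ 𝔼[Ũ_n(M)]`.
For the Doob martingale `M*` of `Y`, the increments of `Y - M*` are `𝔼[Y (m+1) | ℱ m] - Y m ≤ 0`,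
so `Y - M*` is pathwise nonincreasing; together with `G ≤ Y` this gives `Ũ_n(M*) ≤ Y n`
pointwise, hence equality of expectations.
-/

open MeasureTheory Filter

/-- A finite-horizon martingale with respect to the filtration `ℱ` up to time `N`:
an adapted, integrable process with the one-step martingale property. -/
def IsFinMartingale {Ω : Type*} {m0 : MeasurableSpace Ω} (μ : Measure Ω)
    (ℱ : Filtration ℕ m0) (N : ℕ) (M : ℕ → Ω → ℝ) : Prop :=
  (∀ n, n ≤ N → StronglyMeasurable[ℱ n] (M n)) ∧
  (∀ n, n ≤ N → Integrable (M n) μ) ∧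
  ∀ n, n < N → μ[M (n + 1)|ℱ n] =ᵐ[μ] M n

section

variable {Ω : Type*} {m0 : MeasurableSpace Ω} {μ : Measure Ω}

theorem MeasureTheory.Integrable.finset_sup' {ι β : Type*} [NormedAddCommGroup β] [Lattice β]
    [HasSolidNorm β] [IsOrderedAddMonoid β] {s : Finset ι} (hs : s.Nonempty) {f : ι → Ω → β}
    (hf : ∀ i ∈ s, Integrable (f i) μ) :
    Integrable (fun ω => s.sup' hs fun i => f i ω) μ := by
  simp_rw [← Finset.sup'_apply]
  exact Finset.sup'_induction hs f (p := (Integrable · μ)) (fun _ hf _ hg => hf.sup hg) hf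

theorem le_condExp_of_le {m : MeasurableSpace Ω} (hm : m ≤ m0) [SigmaFinite (μ.trim hm)]
    {f g : Ω → ℝ} (hf : StronglyMeasurable[m] f) (hfi : Integrable f μ) (hgi : Integrable g μ)
    (hfg : ∀ ω, f ω ≤ g ω) : f ≤ᵐ[μ] μ[g|m] := by
  calc f = μ[f|m] := (condExp_of_stronglyMeasurable hm hf hfi).symm
    _ ≤ᵐ[μ] μ[g|m] := condExp_mono hfi hgi (Eventually.of_forall hfg)

section DoobMartingale

variable {ℱ : Filtration ℕ m0} {X : ℕ → Ω → ℝ}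

noncomputable def doobMartingale (μ : Measure Ω) (ℱ : Filtration ℕ m0) (X : ℕ → Ω → ℝ) :
    ℕ → Ω → ℝ :=
  fun n ω => ∑ m ∈ Finset.Icc 1 n, (X m ω - μ[X m|ℱ (m - 1)] ω)

theorem doobMartingale_succ (n : ℕ) :
    doobMartingale μ ℱ X (n + 1) = doobMartingale μ ℱ X n + (X (n + 1) - μ[X (n + 1)|ℱ n]) := by
  funext ω
  simp only [doobMartingale, Finset.sum_Icc_succ_top (Nat.le_add_left 1 n), Pi.add_apply,
    Pi.sub_apply, add_tsub_cancel_right]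

theorem isFinMartingale_doobMartingale [IsFiniteMeasure μ] {N : ℕ}
    (hXmeas : ∀ m ≤ N, StronglyMeasurable[ℱ m] (X m)) (hXint : ∀ m ≤ N, Integrable (X m) μ) :
    IsFinMartingale μ ℱ N (doobMartingale μ ℱ X) := by
  have hmeas : ∀ n ≤ N, StronglyMeasurable[ℱ n] (doobMartingale μ ℱ X n) := by
    intro n hn
    refine Finset.stronglyMeasurable_fun_sum _ fun m hm => ?_
    rw [Finset.mem_Icc] at hm
    exact ((hXmeas m (by omega)).mono (ℱ.mono hm.2)).sub
      (stronglyMeasurable_condExp.mono (ℱ.mono (by omega)))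
  have hint : ∀ n ≤ N, Integrable (doobMartingale μ ℱ X n) μ := fun n hn =>
    integrable_finsetSum _ fun m hm =>
      (hXint m ((Finset.mem_Icc.1 hm).2.trans hn)).sub integrable_condExp
  refine ⟨hmeas, hint, fun n hn => ?_⟩
  have hXn : Integrable (X (n + 1)) μ := hXint (n + 1) hn
  rw [doobMartingale_succ]
  calc μ[doobMartingale μ ℱ X n + (X (n + 1) - μ[X (n + 1)|ℱ n])|ℱ n]
      =ᵐ[μ] μ[doobMartingale μ ℱ X n|ℱ n] + (μ[X (n + 1)|ℱ n] - μ[μ[X (n + 1)|ℱ n]|ℱ n]) :=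
        (condExp_add (hint n hn.le) (hXn.sub integrable_condExp) _).trans
          (EventuallyEq.rfl.add (condExp_sub hXn integrable_condExp _))
    _ = doobMartingale μ ℱ X n := by
        rw [condExp_of_stronglyMeasurable (ℱ.le n) (hmeas n hn.le) (hint n hn.le),
          condExp_of_stronglyMeasurable (ℱ.le n) stronglyMeasurable_condExp integrable_condExp,
          sub_self, add_zero]

end DoobMartingale

section SnellEnvelope

variable {ℱ : Filtration ℕ m0} {N : ℕ} {G Y : ℕ → Ω → ℝ}

theorem snell_stronglyMeasurable_integrable (hGadapted : Adapted ℱ G)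
    (hGint : ∀ n, Integrable (G n) μ) (hYN : ∀ ω, Y N ω = G N ω)
    (hYrec : ∀ n, n < N → ∀ ω, Y n ω = max (G n ω) ((μ[Y (n + 1)|ℱ n]) ω))
    {p : ℕ} (hp : p ≤ N) : StronglyMeasurable[ℱ p] (Y p) ∧ Integrable (Y p) μ := by
  induction hp using Nat.decreasingInduction with
  | self => rw [funext hYN]; exact ⟨(hGadapted N).stronglyMeasurable, hGint N⟩
  | of_succ p hp _ =>
    rw [funext (hYrec p hp)]
    exact ⟨@StronglyMeasurable.sup _ _ _ _ (ℱ p) _ _ _ (hGadapted p).stronglyMeasurable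
      stronglyMeasurable_condExp, (hGint p).sup integrable_condExp⟩

theorem le_snell (hYN : ∀ ω, Y N ω = G N ω)
    (hYrec : ∀ n, n < N → ∀ ω, Y n ω = max (G n ω) ((μ[Y (n + 1)|ℱ n]) ω))
    {m : ℕ} (hm : m ≤ N) (ω : Ω) : G m ω ≤ Y m ω := by
  rcases hm.lt_or_eq with hm | rfl
  · exact (hYrec m hm ω).ge.trans' (le_max_left _ _)
  · exact (hYN ω).ge

theorem snell_sub_doobMartingale_antitoneOn
    (hYrec : ∀ n, n < N → ∀ ω, Y n ω = max (G n ω) ((μ[Y (n + 1)|ℱ n]) ω)) (ω : Ω) :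
    AntitoneOn (fun m => Y m ω - doobMartingale μ ℱ Y m ω) (Set.Iic N) := by
  refine antitoneOn_of_add_one_le Set.ordConnected_Iic fun m _ _ hm1 => ?_
  have hcond : μ[Y (m + 1)|ℱ m] ω ≤ Y m ω :=
    (hYrec m (Nat.lt_of_succ_le hm1) ω).ge.trans' (le_max_right _ _)
  simp only [doobMartingale_succ, Pi.add_apply, Pi.sub_apply]
  linarith

theorem sup'_sub_doobMartingale_le_snell (hYN : ∀ ω, Y N ω = G N ω)
    (hYrec : ∀ n, n < N → ∀ ω, Y n ω = max (G n ω) ((μ[Y (n + 1)|ℱ n]) ω))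
    {n : ℕ} (hn : n ≤ N) (ω : Ω) :
    (Finset.Icc n N).sup' (Finset.nonempty_Icc.2 hn)
      (fun m => G m ω - doobMartingale μ ℱ Y m ω + doobMartingale μ ℱ Y n ω) ≤ Y n ω := by
  refine Finset.sup'_le _ _ fun m hm => ?_
  rw [Finset.mem_Icc] at hm
  have hG := le_snell hYN hYrec hm.2 ω
  have hanti := snell_sub_doobMartingale_antitoneOn hYrec ω hn (Set.mem_Iic.2 hm.2) hm.1
  dsimp only at hanti
  linarith

theorem snell_sub_le_condExp_sup' [IsFiniteMeasure μ] (hGadapted : Adapted ℱ G)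
    (hGint : ∀ n, Integrable (G n) μ) (hYN : ∀ ω, Y N ω = G N ω)
    (hYrec : ∀ n, n < N → ∀ ω, Y n ω = max (G n ω) ((μ[Y (n + 1)|ℱ n]) ω))
    {M : ℕ → Ω → ℝ} (hM : IsFinMartingale μ ℱ N M) {p : ℕ} (hp : p ≤ N) :
    (fun ω => Y p ω - M p ω) ≤ᵐ[μ]
      μ[fun ω => (Finset.Icc p N).sup' (Finset.nonempty_Icc.2 hp)
          (fun m => G m ω - M m ω)|ℱ p] := by
  obtain ⟨hMmeas, hMint, hMcond⟩ := hM
  have hY := fun q (hq : q ≤ N) => snell_stronglyMeasurable_integrable hGadapted hGint hYN hYrec hq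
  have hSint : ∀ q (hq : q ≤ N), Integrable (fun ω => (Finset.Icc q N).sup'
      (Finset.nonempty_Icc.2 hq) (fun m => G m ω - M m ω)) μ := fun q hq =>
    Integrable.finset_sup' _ fun m hm => (hGint m).sub (hMint m (Finset.mem_Icc.1 hm).2)
  induction hp using Nat.decreasingInduction with
  | self =>
    refine le_condExp_of_le (ℱ.le N) ((hY N le_rfl).1.sub (hMmeas N le_rfl))
      ((hY N le_rfl).2.sub (hMint N le_rfl)) (hSint N le_rfl) fun ω => ?_
    rw [hYN ω]
    exact Finset.le_sup' (fun m => G m ω - M m ω) (Finset.mem_Icc.2 ⟨le_rfl, le_rfl⟩)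
  | of_succ p hp ih =>
    have hGM : (fun ω => G p ω - M p ω) ≤ᵐ[μ] μ[_|ℱ p] :=
      le_condExp_of_le (ℱ.le p) ((hGadapted p).stronglyMeasurable.sub (hMmeas p hp.le))
        ((hGint p).sub (hMint p hp.le)) (hSint p hp.le) fun ω =>
          Finset.le_sup' (fun m => G m ω - M m ω) (Finset.mem_Icc.2 ⟨le_rfl, hp.le⟩)
    have hcontinue : (fun ω => μ[Y (p + 1)|ℱ p] ω - M p ω) ≤ᵐ[μ] μ[_|ℱ p] :=
      calc (fun ω => μ[Y (p + 1)|ℱ p] ω - M p ω)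
          =ᵐ[μ] μ[Y (p + 1)|ℱ p] - μ[M (p + 1)|ℱ p] := EventuallyEq.rfl.sub (hMcond p hp).symm
        _ =ᵐ[μ] μ[fun ω => Y (p + 1) ω - M (p + 1) ω|ℱ p] :=
          (condExp_sub (hY (p + 1) hp).2 (hMint (p + 1) hp) _).symm
        _ ≤ᵐ[μ] μ[μ[_|ℱ (p + 1)]|ℱ p] :=
          condExp_mono ((hY (p + 1) hp).2.sub (hMint (p + 1) hp)) integrable_condExp ih
        _ =ᵐ[μ] μ[_|ℱ p] := condExp_condExp_of_le (ℱ.mono p.le_succ) (ℱ.le (p + 1))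
        _ ≤ᵐ[μ] μ[_|ℱ p] := condExp_mono (hSint (p + 1) hp) (hSint p hp.le) <|
          Eventually.of_forall fun ω => Finset.sup'_mono _ (Finset.Icc_subset_Icc_left p.le_succ) _
    filter_upwards [hGM, hcontinue] with ω hGMω hcontinueω
    rw [hYrec p hp ω, ← max_sub_sub_right]
    exact max_le hGMω hcontinueω

theorem integral_snell_le_integral_sup' [IsFiniteMeasure μ] (hGadapted : Adapted ℱ G)
    (hGint : ∀ n, Integrable (G n) μ) (hYN : ∀ ω, Y N ω = G N ω)
    (hYrec : ∀ n, n < N → ∀ ω, Y n ω = max (G n ω) ((μ[Y (n + 1)|ℱ n]) ω))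
    {M : ℕ → Ω → ℝ} (hM : IsFinMartingale μ ℱ N M) {n : ℕ} (hn : n ≤ N) :
    ∫ ω, Y n ω ∂μ ≤ ∫ ω, (Finset.Icc n N).sup' (Finset.nonempty_Icc.2 hn)
      (fun m => G m ω - M m ω + M n ω) ∂μ := by
  have hMn : Integrable (M n) μ := hM.2.1 n hn
  have hYn : Integrable (Y n) μ :=
    (snell_stronglyMeasurable_integrable hGadapted hGint hYN hYrec hn).2
  have hSint : Integrable (fun ω => (Finset.Icc n N).sup' (Finset.nonempty_Icc.2 hn)
      (fun m => G m ω - M m ω)) μ :=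
    Integrable.finset_sup' _ fun m hm => (hGint m).sub (hM.2.1 m (Finset.mem_Icc.1 hm).2)
  have hsub : ∫ ω, Y n ω - M n ω ∂μ ≤ ∫ ω, (Finset.Icc n N).sup' (Finset.nonempty_Icc.2 hn)
      (fun m => G m ω - M m ω) ∂μ :=
    calc ∫ ω, Y n ω - M n ω ∂μ ≤ ∫ ω, μ[_|ℱ n] ω ∂μ := integral_mono_ae (hYn.sub hMn)
          integrable_condExp (snell_sub_le_condExp_sup' hGadapted hGint hYN hYrec hM hn)
      _ = _ := integral_condExp (ℱ.le n)
  simp_rw [← Finset.sup'_add]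
  rw [integral_add hSint hMn]
  rw [integral_sub hYn hMn] at hsub
  linarith

end SnellEnvelope

end

theorem dual_upper_bound_tight_general
    {Ω : Type*} {m0 : MeasurableSpace Ω} {μ : Measure Ω} [IsProbabilityMeasure μ]
    (N : ℕ) (ℱ : Filtration ℕ m0)
    (G : ℕ → Ω → ℝ) (hGadapted : Adapted ℱ G) (hGint : ∀ n, Integrable (G n) μ)
    (Y : ℕ → Ω → ℝ)
    (hYN : ∀ ω, Y N ω = G N ω)
    (hYrec : ∀ n, n < N → ∀ ω, Y n ω = max (G n ω) ((μ[Y (n + 1)|ℱ n]) ω))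
    (Mstar : ℕ → Ω → ℝ)
    (hMstar : ∀ n ω, Mstar n ω = ∑ m ∈ Finset.Icc 1 n, (Y m ω - (μ[Y m|ℱ (m - 1)]) ω))
    (n : ℕ) (hn : n ≤ N) :
    IsLeast {x : ℝ | ∃ M : ℕ → Ω → ℝ, IsFinMartingale μ ℱ N M ∧
        x = ∫ ω, (Finset.Icc n N).sup' (Finset.nonempty_Icc.mpr hn)
              (fun m => G m ω - M m ω + M n ω) ∂μ}
      (∫ ω, Y n ω ∂μ) ∧
    IsFinMartingale μ ℱ N Mstar ∧
    ∫ ω, (Finset.Icc n N).sup' (Finset.nonempty_Icc.mpr hn)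
        (fun m => G m ω - Mstar m ω + Mstar n ω) ∂μ = ∫ ω, Y n ω ∂μ := by
  obtain rfl : Mstar = doobMartingale μ ℱ Y := funext fun n => funext (hMstar n)
  have hY := fun p (hp : p ≤ N) => snell_stronglyMeasurable_integrable hGadapted hGint hYN hYrec hp
  have hMstar_mart : IsFinMartingale μ ℱ N (doobMartingale μ ℱ Y) :=
    isFinMartingale_doobMartingale (fun p hp => (hY p hp).1) (fun p hp => (hY p hp).2)
  have hlower := fun M (hM : IsFinMartingale μ ℱ N M) =>
    integral_snell_le_integral_sup' hGadapted hGint hYN hYrec hM hn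
  have hattained : ∫ ω, (Finset.Icc n N).sup' (Finset.nonempty_Icc.mpr hn)
      (fun m => G m ω - doobMartingale μ ℱ Y m ω + doobMartingale μ ℱ Y n ω) ∂μ
      = ∫ ω, Y n ω ∂μ := by
    have hint : Integrable (fun ω => (Finset.Icc n N).sup' (Finset.nonempty_Icc.mpr hn)
        (fun m => G m ω - doobMartingale μ ℱ Y m ω + doobMartingale μ ℱ Y n ω)) μ :=
      Integrable.finset_sup' _ fun m hm =>
        ((hGint m).sub (hMstar_mart.2.1 m (Finset.mem_Icc.1 hm).2)).add (hMstar_mart.2.1 n hn)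
    exact le_antisymm (integral_mono hint (hY n hn).2
      (sup'_sub_doobMartingale_le_snell hYN hYrec hn)) (hlower _ hMstar_mart)
  refine ⟨⟨⟨_, hMstar_mart, hattained.symm⟩, ?_⟩, hMstar_mart, hattained⟩
  rintro x ⟨M, hM, rfl⟩
  exact hlower M hM

/-- Tightness of the dual upper bound in expectation: for every `n ≤ N`,
`𝔼[Y n]` is the least element of the set `{𝔼[Ũ_n(M)] : M a martingale}`
(so the infimum equals `𝔼[Y n]` and is attained), and it is attained by the
Doob martingale `Mstar` of the Snell envelope. -/
theorem dual_upper_bound_tight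
    {Ω : Type*} {m0 : MeasurableSpace Ω} {μ : Measure Ω} [IsProbabilityMeasure μ]
    (N : ℕ) (hN : 1 ≤ N) (ℱ : Filtration ℕ m0)
    (G : ℕ → Ω → ℝ) (hGadapted : Adapted ℱ G) (hGint : ∀ n, Integrable (G n) μ)
    (Y : ℕ → Ω → ℝ)
    (hYN : ∀ ω, Y N ω = G N ω)
    (hYrec : ∀ n, n < N → ∀ ω, Y n ω = max (G n ω) ((μ[Y (n + 1)|ℱ n]) ω))
    (Mstar : ℕ → Ω → ℝ)
    (hMstar : ∀ n ω, Mstar n ω = ∑ m ∈ Finset.Icc 1 n, (Y m ω - (μ[Y m|ℱ (m - 1)]) ω))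
    (n : ℕ) (hn : n ≤ N) :
    IsLeast {x : ℝ | ∃ M : ℕ → Ω → ℝ, IsFinMartingale μ ℱ N M ∧
        x = ∫ ω, (Finset.Icc n N).sup' (Finset.nonempty_Icc.mpr hn)
              (fun m => G m ω - M m ω + M n ω) ∂μ}
      (∫ ω, Y n ω ∂μ) ∧
    IsFinMartingale μ ℱ N Mstar ∧
    ∫ ω, (Finset.Icc n N).sup' (Finset.nonempty_Icc.mpr hn)
        (fun m => G m ω - Mstar m ω + Mstar n ω) ∂μ = ∫ ω, Y n ω ∂μ :=
  dual_upper_bound_tight_general N ℱ G hGadapted hGint Y hYN hYrec Mstar hMstar n hn
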